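/- Suppose each component H_{i,j} is convex and L_H-smooth, and that x* ∈ ℝ^d is a minimizer of H with respect to which H is μ-quasi-strongly convex for some μ > 0. Let γ = 1/(6L_H), p ∈ (0,1], and define the Lyapunov function Φ^k = ‖x^k − x*‖² + (4γ²/(p n²))∑_{i,j=1}^n ‖∇H_{i,j}(w^k) − ∇H_{i,j}(x*)‖². Then the L-SVRHG iterates satisfy E[Φ^k] ≤ max{1 − μ/(6L_H), 1 − p/2}^k Φ⁰ for all k ≥ 0. -/

import Mathlib

/-!
The usual L-SVRG Lyapunov argument, which only uses that `H` is the average of the convex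
`L_H`-smooth components `H_{i,j}`. The estimator `g^k` is unbiased, so
`E‖x^{k+1} - x*‖² = ‖x^k - x*‖² - 2γ⟪∇H(x^k), x^k - x*⟫ + γ² E‖g^k‖²`.
Quasi-strong convexity bounds the inner product by the gap `H(x^k) - H(x*)` and a `-μ/2 ‖x^k - x*‖²`
term. Cocoercivity of the components (descent lemma plus convexity) bounds the mean squared
gradient deviation at `x^k` by `2 L_H` times the gap, and, together with "variance ≤ second moment",
bounds `E‖g^k‖²` by `4 L_H` times the gap plus twice the deviation at `w^k`. For `γ = 1/(6 L_H)` the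
gap terms cancel, the reference point's term contracts by `1 - p/2`, and `E Φ^{k+1} ≤ ρ Φ^k`
iterates along the recursion defining `lsvrhgExp`.
-/

open scoped RealInnerProductSpace BigOperators

noncomputable section

variable {n d1 d2 : ℕ}

/-- The signed gradient field ξᵢ(x) = (∇_{x1} gᵢ(x), −∇_{x2} gᵢ(x)). -/
def xi (g : EuclideanSpace ℝ (Fin d1 ⊕ Fin d2) → ℝ)
    (x : EuclideanSpace ℝ (Fin d1 ⊕ Fin d2)) : EuclideanSpace ℝ (Fin d1 ⊕ Fin d2) :=
  (WithLp.equiv 2 _).symm (Sum.elim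
    (fun a => gradient g x (Sum.inl a))
    (fun j => -(gradient g x (Sum.inr j))))

/-- The Hamiltonian component H_{i,j}(x) = ½⟨ξᵢ(x), ξⱼ(x)⟩. -/
def HamComp (g : Fin n → EuclideanSpace ℝ (Fin d1 ⊕ Fin d2) → ℝ) (i j : Fin n)
    (x : EuclideanSpace ℝ (Fin d1 ⊕ Fin d2)) : ℝ :=
  (1 / 2 : ℝ) * ⟪xi (g i) x, xi (g j) x⟫

/-- The Hamiltonian H(x) = ½‖(1/n)∑ᵢξᵢ(x)‖². -/
def Ham (g : Fin n → EuclideanSpace ℝ (Fin d1 ⊕ Fin d2) → ℝ)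
    (x : EuclideanSpace ℝ (Fin d1 ⊕ Fin d2)) : ℝ :=
  (1 / 2 : ℝ) * ‖(n : ℝ)⁻¹ • ∑ i, xi (g i) x‖ ^ 2

/-- One step of L-SVRHG on the state s = (x, w), given indices (i, j) and the
Bernoulli outcome θ: x ↦ x − γ(∇H_{i,j}(x) − ∇H_{i,j}(w) + ∇H(w)),
and w ↦ x if θ, w ↦ w otherwise. -/
def lsvrhgStep (g : Fin n → EuclideanSpace ℝ (Fin d1 ⊕ Fin d2) → ℝ) (γ : ℝ)
    (i j : Fin n) (θ : Bool)
    (s : EuclideanSpace ℝ (Fin d1 ⊕ Fin d2) × EuclideanSpace ℝ (Fin d1 ⊕ Fin d2)) :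
    EuclideanSpace ℝ (Fin d1 ⊕ Fin d2) × EuclideanSpace ℝ (Fin d1 ⊕ Fin d2) :=
  (s.1 - γ • (gradient (HamComp g i j) s.1 - gradient (HamComp g i j) s.2
      + gradient (Ham g) s.2),
   if θ then s.1 else s.2)

/-- `lsvrhgExp g γ p k φ s` is the expectation E[φ(x^k, w^k) | (x⁰, w⁰) = s] for the
L-SVRHG Markov chain with (i_m, j_m) i.i.d. uniform on {1,…,n}² and θ_m i.i.d.
Bernoulli(p), all independent. -/
def lsvrhgExp (g : Fin n → EuclideanSpace ℝ (Fin d1 ⊕ Fin d2) → ℝ) (γ p : ℝ) :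
    ℕ → (EuclideanSpace ℝ (Fin d1 ⊕ Fin d2) × EuclideanSpace ℝ (Fin d1 ⊕ Fin d2) → ℝ) →
      EuclideanSpace ℝ (Fin d1 ⊕ Fin d2) × EuclideanSpace ℝ (Fin d1 ⊕ Fin d2) → ℝ
  | 0, φ => φ
  | k + 1, φ => fun s => ((n : ℝ) ^ 2)⁻¹ * ∑ i, ∑ j,
      (p * lsvrhgExp g γ p k φ (lsvrhgStep g γ i j true s)
        + (1 - p) * lsvrhgExp g γ p k φ (lsvrhgStep g γ i j false s))

section ConvexSmooth

variable {F : Type*} [NormedAddCommGroup F] [InnerProductSpace ℝ F] [CompleteSpace F]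
  {f : F → ℝ}

open AffineMap

theorem hasDerivAt_comp_lineMap {x y : F} {t : ℝ} (hf : DifferentiableAt ℝ f (lineMap x y t)) :
    HasDerivAt (fun s => f (lineMap x y s)) ⟪gradient f (lineMap x y t), y - x⟫ t := by
  rw [inner_gradient_left]
  exact hf.hasFDerivAt.comp_hasDerivAt t hasDerivAt_lineMap

theorem ConvexOn.add_inner_gradient_le (hc : ConvexOn ℝ Set.univ f) {x : F}
    (hx : DifferentiableAt ℝ f x) (y : F) : f x + ⟪gradient f x, y - x⟫ ≤ f y := by
  have hq : ConvexOn ℝ Set.univ (f ∘ lineMap x y) := hc.comp_affineMap (lineMap x y)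
  have hslope := hq.le_slope_of_hasDerivAt (Set.mem_univ 0) (Set.mem_univ 1) zero_lt_one
    (hasDerivAt_comp_lineMap (t := 0) (by simpa using hx))
  simp only [slope_def_field, Function.comp_apply, lineMap_apply_zero, lineMap_apply_one,
    sub_zero, div_one] at hslope
  linarith

theorem le_add_inner_gradient_add_sq {L : ℝ} (hf : Differentiable ℝ f)
    (hlip : ∀ a b, ‖gradient f a - gradient f b‖ ≤ L * ‖a - b‖) (x y : F) :
    f y ≤ f x + ⟪gradient f x, y - x⟫ + L / 2 * ‖y - x‖ ^ 2 := by
  set h : ℝ → ℝ := fun t =>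
    f (lineMap x y t) - t * ⟪gradient f x, y - x⟫ - L / 2 * t ^ 2 * ‖y - x‖ ^ 2
  have hderiv : ∀ t, HasDerivAt h (⟪gradient f (lineMap x y t) - gradient f x, y - x⟫
      - L * t * ‖y - x‖ ^ 2) t := by
    intro t
    have := ((hasDerivAt_comp_lineMap (x := x) (y := y) (hf _)).sub
      ((hasDerivAt_id t).mul_const ⟪gradient f x, y - x⟫)).sub
      (((hasDerivAt_pow 2 t).const_mul (L / 2)).mul_const (‖y - x‖ ^ 2))
    refine this.congr_deriv ?_
    rw [inner_sub_left, Nat.cast_ofNat, show 2 - 1 = 1 from rfl, pow_one]; ring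
  have hanti : AntitoneOn h (Set.Ici 0) := by
    refine antitoneOn_of_hasDerivWithinAt_nonpos (convex_Ici 0)
      (fun t _ => (hderiv t).continuousAt.continuousWithinAt)
      (fun t _ => (hderiv t).hasDerivWithinAt) fun t ht => ?_
    rw [interior_Ici, Set.mem_Ioi] at ht
    have hdist : ‖lineMap x y t - x‖ = t * ‖y - x‖ := by
      rw [lineMap_apply_module', add_sub_cancel_right, norm_smul, Real.norm_of_nonneg ht.le]
    rw [sub_nonpos]
    calc ⟪gradient f (lineMap x y t) - gradient f x, y - x⟫
        ≤ ‖gradient f (lineMap x y t) - gradient f x‖ * ‖y - x‖ := real_inner_le_norm _ _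
      _ ≤ L * ‖lineMap x y t - x‖ * ‖y - x‖ := by gcongr; exact hlip _ _
      _ = L * t * ‖y - x‖ ^ 2 := by rw [hdist]; ring
  have := hanti Set.self_mem_Ici (zero_le_one : (0:ℝ) ≤ 1) zero_le_one
  simp only [h, lineMap_apply_zero, lineMap_apply_one] at this
  linarith

theorem ConvexOn.norm_gradient_sub_sq_le (hc : ConvexOn ℝ Set.univ f) (hf : Differentiable ℝ f)
    {L : ℝ} (hL : 0 < L) (hlip : ∀ a b, ‖gradient f a - gradient f b‖ ≤ L * ‖a - b‖) (x y : F) :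
    ‖gradient f x - gradient f y‖ ^ 2 ≤ 2 * L * (f x - f y - ⟪gradient f y, x - y⟫) := by
  set u := gradient f x - gradient f y
  -- test the two bounds at the point a gradient step of length `1 / L` away from `x`
  set z := x - L⁻¹ • u with hz
  have hlower := hc.add_inner_gradient_le (hf y) z
  have hupper := le_add_inner_gradient_add_sq hf hlip x z
  have hzy : z - y = (x - y) - L⁻¹ • u := by rw [hz]; abel
  have hzx : z - x = -(L⁻¹ • u) := by rw [hz]; abel
  have hu : ⟪gradient f x, u⟫ - ⟪gradient f y, u⟫ = ‖u‖ ^ 2 := by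
    rw [← inner_sub_left, real_inner_self_eq_norm_sq]
  rw [hzy, inner_sub_right, real_inner_smul_right] at hlower
  rw [hzx, inner_neg_right, real_inner_smul_right, norm_neg, norm_smul,
    Real.norm_of_nonneg (inv_nonneg.2 hL.le)] at hupper
  have key : ‖u‖ ^ 2 = 2 * L * (L⁻¹ * (⟪gradient f x, u⟫ - ⟪gradient f y, u⟫)
      - L / 2 * (L⁻¹ * ‖u‖) ^ 2) := by
    rw [hu]; field_simp; ring
  rw [key]
  exact mul_le_mul_of_nonneg_left (by linarith) (by positivity)

end ConvexSmooth

theorem norm_sub_sq_le_two_mul {E : Type*} [SeminormedAddCommGroup E] (a b : E) :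
    ‖a - b‖ ^ 2 ≤ 2 * ‖a‖ ^ 2 + 2 * ‖b‖ ^ 2 := by
  nlinarith [norm_sub_le a b, norm_nonneg (a - b), sq_nonneg (‖a‖ - ‖b‖)]

section FiniteSum

variable {F : Type*} [NormedAddCommGroup F] [InnerProductSpace ℝ F] {ι : Type*} [Fintype ι]

theorem gradient_eq_average [CompleteSpace F] {fs : ι → F → ℝ} {f : F → ℝ}
    (hf : ∀ y, f y = (Fintype.card ι : ℝ)⁻¹ * ∑ k, fs k y) {x : F}
    (hd : ∀ k, DifferentiableAt ℝ (fs k) x) :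
    gradient f x = (Fintype.card ι : ℝ)⁻¹ • ∑ k, gradient (fs k) x := by
  refine HasGradientAt.gradient (hasGradientAt_iff_hasFDerivAt.2 ?_)
  rw [funext hf, map_smul, map_sum]
  simp only [gradient, LinearIsometryEquiv.apply_symm_apply]
  exact (HasFDerivAt.fun_sum fun k _ => (hd k).hasFDerivAt).const_mul _

theorem average_const [Nonempty ι] (a : ℝ) :
    (Fintype.card ι : ℝ)⁻¹ * ∑ _k : ι, a = a := by
  rw [Finset.sum_const, Finset.card_univ, nsmul_eq_mul, inv_mul_cancel_left₀]
  exact Nat.cast_ne_zero.2 Fintype.card_ne_zero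

theorem average_norm_sub_smul_sq [Nonempty ι] (v : F) (γ : ℝ) (G : ι → F) :
    (Fintype.card ι : ℝ)⁻¹ * ∑ k, ‖v - γ • G k‖ ^ 2 = ‖v‖ ^ 2
      - 2 * γ * ⟪v, (Fintype.card ι : ℝ)⁻¹ • ∑ k, G k⟫
      + γ ^ 2 * ((Fintype.card ι : ℝ)⁻¹ * ∑ k, ‖G k‖ ^ 2) := by
  simp only [norm_sub_sq_real, Finset.sum_add_distrib, Finset.sum_sub_distrib, mul_add,
    mul_sub, average_const, real_inner_smul_right, inner_sum, norm_smul, mul_pow,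
    Real.norm_eq_abs, sq_abs, ← Finset.mul_sum]
  ring

theorem average_norm_sub_average_sq_le [Nonempty ι] (X : ι → F) :
    (Fintype.card ι : ℝ)⁻¹ * ∑ k, ‖X k - (Fintype.card ι : ℝ)⁻¹ • ∑ l, X l‖ ^ 2
      ≤ (Fintype.card ι : ℝ)⁻¹ * ∑ k, ‖X k‖ ^ 2 := by
  set m := (Fintype.card ι : ℝ)⁻¹ • ∑ l, X l
  have hsum : (Fintype.card ι : ℝ)⁻¹ * ∑ k, ‖X k - m‖ ^ 2
      = (Fintype.card ι : ℝ)⁻¹ * ∑ k, ‖X k‖ ^ 2 - ‖m‖ ^ 2 := by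
    have hmean : (Fintype.card ι : ℝ)⁻¹ * ⟪∑ l, X l, m⟫ = ‖m‖ ^ 2 := by
      rw [← real_inner_smul_left, real_inner_self_eq_norm_sq]
    simp only [norm_sub_sq_real, Finset.sum_add_distrib, Finset.sum_sub_distrib,
      ← Finset.mul_sum, ← sum_inner, mul_add, mul_sub, average_const]
    linear_combination (-2) * hmean
  rw [hsum]
  linarith [sq_nonneg ‖m‖]

end FiniteSum

section SVRG

variable {F : Type*} [NormedAddCommGroup F] [InnerProductSpace ℝ F] [CompleteSpace F]
  {ι : Type*} [Fintype ι] {fs : ι → F → ℝ} {f : F → ℝ}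

def svrgGrad (fs : ι → F → ℝ) (f : F → ℝ) (k : ι) (x w : F) : F :=
  gradient (fs k) x - gradient (fs k) w + gradient f w

def svrgLyapunov (fs : ι → F → ℝ) (xstar : F) (γ p : ℝ) (s : F × F) : ℝ :=
  ‖s.1 - xstar‖ ^ 2 + 4 * γ ^ 2 / p *
    ((Fintype.card ι : ℝ)⁻¹ * ∑ k, ‖gradient (fs k) s.2 - gradient (fs k) xstar‖ ^ 2)

theorem average_svrgGrad [Nonempty ι] (hf : ∀ y, f y = (Fintype.card ι : ℝ)⁻¹ * ∑ k, fs k y)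
    (hd : ∀ k, Differentiable ℝ (fs k)) (x w : F) :
    (Fintype.card ι : ℝ)⁻¹ • ∑ k, svrgGrad fs f k x w = gradient f x := by
  have hN : (Fintype.card ι : ℝ) ≠ 0 := Nat.cast_ne_zero.2 Fintype.card_ne_zero
  simp only [svrgGrad, Finset.sum_add_distrib, Finset.sum_sub_distrib, Finset.sum_const,
    Finset.card_univ, ← Nat.cast_smul_eq_nsmul ℝ, smul_add, smul_sub, smul_smul,
    inv_mul_cancel₀ hN, one_smul, ← gradient_eq_average hf fun k => hd k _]
  abel

theorem average_norm_gradient_sub_sq_le {L : ℝ} (hL : 0 < L)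
    (hconv : ∀ k, ConvexOn ℝ Set.univ (fs k)) (hd : ∀ k, Differentiable ℝ (fs k))
    (hlip : ∀ k a b, ‖gradient (fs k) a - gradient (fs k) b‖ ≤ L * ‖a - b‖)
    (hf : ∀ y, f y = (Fintype.card ι : ℝ)⁻¹ * ∑ k, fs k y)
    {xstar : F} (hstar : gradient f xstar = 0) (z : F) :
    (Fintype.card ι : ℝ)⁻¹ * ∑ k, ‖gradient (fs k) z - gradient (fs k) xstar‖ ^ 2
      ≤ 2 * L * (f z - f xstar) := by
  have hinner : (Fintype.card ι : ℝ)⁻¹ * ∑ k, ⟪gradient (fs k) xstar, z - xstar⟫ = 0 := by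
    rw [← sum_inner, ← real_inner_smul_left, ← gradient_eq_average hf fun k => hd k _, hstar,
      inner_zero_left]
  calc (Fintype.card ι : ℝ)⁻¹ * ∑ k, ‖gradient (fs k) z - gradient (fs k) xstar‖ ^ 2
      ≤ (Fintype.card ι : ℝ)⁻¹ * ∑ k,
          2 * L * (fs k z - fs k xstar - ⟪gradient (fs k) xstar, z - xstar⟫) := by
        gcongr with k
        exact (hconv k).norm_gradient_sub_sq_le (hd k) hL (hlip k) z xstar
    _ = 2 * L * (f z - f xstar) := by
        simp only [← Finset.mul_sum, Finset.sum_sub_distrib, mul_sub, hf]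
        linear_combination (-2 * L) * hinner

theorem average_norm_svrgGrad_sq_le [Nonempty ι] {L : ℝ} (hL : 0 < L)
    (hconv : ∀ k, ConvexOn ℝ Set.univ (fs k)) (hd : ∀ k, Differentiable ℝ (fs k))
    (hlip : ∀ k a b, ‖gradient (fs k) a - gradient (fs k) b‖ ≤ L * ‖a - b‖)
    (hf : ∀ y, f y = (Fintype.card ι : ℝ)⁻¹ * ∑ k, fs k y)
    {xstar : F} (hstar : gradient f xstar = 0) (x w : F) :
    (Fintype.card ι : ℝ)⁻¹ * ∑ k, ‖svrgGrad fs f k x w‖ ^ 2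
      ≤ 4 * L * (f x - f xstar)
        + 2 * ((Fintype.card ι : ℝ)⁻¹ * ∑ k, ‖gradient (fs k) w - gradient (fs k) xstar‖ ^ 2) := by
  set b : ι → F := fun k => gradient (fs k) w - gradient (fs k) xstar
  have hmean : (Fintype.card ι : ℝ)⁻¹ • ∑ k, b k = gradient f w := by
    simp only [b, Finset.sum_sub_distrib, smul_sub, ← gradient_eq_average hf fun k => hd k _,
      hstar, sub_zero]
  have hsplit : ∀ k, svrgGrad fs f k x w
      = (gradient (fs k) x - gradient (fs k) xstar) - (b k - gradient f w) := by
    intro k; simp only [svrgGrad, b]; abel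
  have hx := average_norm_gradient_sub_sq_le hL hconv hd hlip hf hstar x
  have hvar := average_norm_sub_average_sq_le b
  rw [hmean] at hvar
  calc (Fintype.card ι : ℝ)⁻¹ * ∑ k, ‖svrgGrad fs f k x w‖ ^ 2
      ≤ (Fintype.card ι : ℝ)⁻¹ * ∑ k, (2 * ‖gradient (fs k) x - gradient (fs k) xstar‖ ^ 2
          + 2 * ‖b k - gradient f w‖ ^ 2) := by
        gcongr with k
        rw [hsplit]
        exact norm_sub_sq_le_two_mul _ _
    _ = 2 * ((Fintype.card ι : ℝ)⁻¹ * ∑ k, ‖gradient (fs k) x - gradient (fs k) xstar‖ ^ 2)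
          + 2 * ((Fintype.card ι : ℝ)⁻¹ * ∑ k, ‖b k - gradient f w‖ ^ 2) := by
        simp only [Finset.sum_add_distrib, ← Finset.mul_sum]; ring
    _ ≤ _ := by linarith

theorem average_svrgLyapunov_step_le [Nonempty ι] {L : ℝ} (hL : 0 < L)
    (hconv : ∀ k, ConvexOn ℝ Set.univ (fs k)) (hd : ∀ k, Differentiable ℝ (fs k))
    (hlip : ∀ k a b, ‖gradient (fs k) a - gradient (fs k) b‖ ≤ L * ‖a - b‖)
    (hf : ∀ y, f y = (Fintype.card ι : ℝ)⁻¹ * ∑ k, fs k y)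
    {xstar : F} (hstar : gradient f xstar = 0) {μ : ℝ} {x : F}
    (hqsc : f x + ⟪gradient f x, xstar - x⟫ + μ / 2 * ‖xstar - x‖ ^ 2 ≤ f xstar)
    {γ : ℝ} (hγ0 : 0 ≤ γ) (hγL : γ ≤ 1 / (6 * L)) {p : ℝ} (hp : 0 < p) (w : F) :
    (Fintype.card ι : ℝ)⁻¹ * ∑ k,
        (p * svrgLyapunov fs xstar γ p (x - γ • svrgGrad fs f k x w, x)
          + (1 - p) * svrgLyapunov fs xstar γ p (x - γ • svrgGrad fs f k x w, w))
      ≤ max (1 - γ * μ) (1 - p / 2) * svrgLyapunov fs xstar γ p (x, w) := by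
  set R := ‖x - xstar‖ ^ 2
  set Dx := (Fintype.card ι : ℝ)⁻¹ * ∑ k, ‖gradient (fs k) x - gradient (fs k) xstar‖ ^ 2
  set Dw := (Fintype.card ι : ℝ)⁻¹ * ∑ k, ‖gradient (fs k) w - gradient (fs k) xstar‖ ^ 2
  set M := (Fintype.card ι : ℝ)⁻¹ * ∑ k, ‖svrgGrad fs f k x w‖ ^ 2
  set Δ := f x - f xstar
  have hdist : (Fintype.card ι : ℝ)⁻¹ * ∑ k, ‖x - γ • svrgGrad fs f k x w - xstar‖ ^ 2
      = R - 2 * γ * ⟪x - xstar, gradient f x⟫ + γ ^ 2 * M := by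
    simp only [sub_right_comm x _ xstar]
    rw [average_norm_sub_smul_sq, average_svrgGrad hf hd]
  have hexpand : (Fintype.card ι : ℝ)⁻¹ * ∑ k,
        (p * svrgLyapunov fs xstar γ p (x - γ • svrgGrad fs f k x w, x)
          + (1 - p) * svrgLyapunov fs xstar γ p (x - γ • svrgGrad fs f k x w, w))
      = R - 2 * γ * ⟪x - xstar, gradient f x⟫ + γ ^ 2 * M
        + p * (4 * γ ^ 2 / p) * Dx + (1 - p) * (4 * γ ^ 2 / p) * Dw := by
    rw [← hdist]
    simp only [svrgLyapunov, mul_add, Finset.sum_add_distrib, ← Finset.mul_sum, average_const]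
    ring
  have hM := average_norm_svrgGrad_sq_le hL hconv hd hlip hf hstar x w
  have hDx := average_norm_gradient_sub_sq_le hL hconv hd hlip hf hstar x
  have hDx0 : 0 ≤ Dx := by positivity
  have hDw0 : 0 ≤ Dw := by positivity
  have hΔ0 : 0 ≤ Δ := (mul_nonneg_iff_of_pos_left (by positivity)).1 (hDx0.trans hDx)
  have hqsc' : -(2 * γ) * ⟪x - xstar, gradient f x⟫ ≤ -(2 * γ) * Δ - γ * μ * R := by
    rw [real_inner_comm, ← neg_sub x xstar, inner_neg_left, norm_neg] at hqsc
    linarith [mul_le_mul_of_nonneg_left hqsc (by positivity : (0:ℝ) ≤ 2 * γ)]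
  -- the step size bound makes the function-value gap drop out
  have hgap : (-2 * γ + 12 * γ ^ 2 * L) * Δ ≤ 0 := by
    have : γ * (6 * L) ≤ 1 := by rwa [le_div_iff₀ (by positivity)] at hγL
    exact mul_nonpos_of_nonpos_of_nonneg (by nlinarith) hΔ0
  have hρR : (1 - γ * μ) * R ≤ max (1 - γ * μ) (1 - p / 2) * R :=
    mul_le_mul_of_nonneg_right (le_max_left _ _) (by positivity)
  have hρD : (1 - p / 2) * (4 * γ ^ 2 / p * Dw)
      ≤ max (1 - γ * μ) (1 - p / 2) * (4 * γ ^ 2 / p * Dw) :=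
    mul_le_mul_of_nonneg_right (le_max_right _ _) (by positivity)
  have hpK : p * (4 * γ ^ 2 / p) = 4 * γ ^ 2 := mul_div_cancel₀ _ hp.ne'
  have hK : ((1 - p) * (4 * γ ^ 2 / p) + 2 * γ ^ 2) * Dw
      = (1 - p / 2) * (4 * γ ^ 2 / p) * Dw := by
    linear_combination (-Dw / 2) * hpK
  rw [hexpand, svrgLyapunov, hpK]
  linarith [mul_le_mul_of_nonneg_left hM (sq_nonneg γ),
    mul_le_mul_of_nonneg_left hDx (by positivity : (0:ℝ) ≤ 4 * γ ^ 2)]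

end SVRG

theorem ContDiff.differentiable_gradient {F : Type*} [NormedAddCommGroup F]
    [InnerProductSpace ℝ F] [CompleteSpace F] {f : F → ℝ} (hf : ContDiff ℝ 2 f) :
    Differentiable ℝ (gradient f) :=
  (InnerProductSpace.toDual ℝ F).symm.differentiable.comp
    ((hf.fderiv_right (by norm_num)).differentiable one_ne_zero)

theorem differentiable_xi {g : EuclideanSpace ℝ (Fin d1 ⊕ Fin d2) → ℝ} (hg : ContDiff ℝ 2 g) :
    Differentiable ℝ (xi g) := by
  refine differentiable_euclidean.2 fun i => ?_
  have hcoord := differentiable_euclidean.1 hg.differentiable_gradient i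
  cases i with
  | inl a => simpa [xi] using hcoord
  | inr b => simpa [xi] using hcoord.neg

theorem differentiable_HamComp {g : Fin n → EuclideanSpace ℝ (Fin d1 ⊕ Fin d2) → ℝ}
    (hg : ∀ i, ContDiff ℝ 2 (g i)) (i j : Fin n) : Differentiable ℝ (HamComp g i j) :=
  ((differentiable_xi (hg i)).inner ℝ (differentiable_xi (hg j))).const_mul _

theorem average_prod_fin (h : Fin n → Fin n → ℝ) :
    (Fintype.card (Fin n × Fin n) : ℝ)⁻¹ * ∑ k : Fin n × Fin n, h k.1 k.2
      = ((n : ℝ) ^ 2)⁻¹ * ∑ i, ∑ j, h i j := by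
  rw [Fintype.sum_prod_type, Fintype.card_prod, Fintype.card_fin, Nat.cast_mul, sq]

theorem Ham_eq_average (g : Fin n → EuclideanSpace ℝ (Fin d1 ⊕ Fin d2) → ℝ)
    (x : EuclideanSpace ℝ (Fin d1 ⊕ Fin d2)) :
    Ham g x = (Fintype.card (Fin n × Fin n) : ℝ)⁻¹ * ∑ k : Fin n × Fin n, HamComp g k.1 k.2 x := by
  rw [average_prod_fin fun i j => HamComp g i j x, Ham, ← real_inner_self_eq_norm_sq,
    real_inner_smul_left, real_inner_smul_right, sum_inner]
  simp only [HamComp, inner_sum, ← Finset.mul_sum]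
  ring

theorem lsvrhgStep_eq (g : Fin n → EuclideanSpace ℝ (Fin d1 ⊕ Fin d2) → ℝ) (γ : ℝ) (i j : Fin n)
    (θ : Bool) (x w : EuclideanSpace ℝ (Fin d1 ⊕ Fin d2)) :
    lsvrhgStep g γ i j θ (x, w) = (x - γ • svrgGrad (fun k : Fin n × Fin n => HamComp g k.1 k.2)
      (Ham g) (i, j) x w, if θ then x else w) := rfl

theorem lsvrhgExp_le_pow_mul {g : Fin n → EuclideanSpace ℝ (Fin d1 ⊕ Fin d2) → ℝ} {γ p ρ : ℝ}
    (hp0 : 0 ≤ p) (hp1 : p ≤ 1) (hρ : 0 ≤ ρ)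
    {Φ : EuclideanSpace ℝ (Fin d1 ⊕ Fin d2) × EuclideanSpace ℝ (Fin d1 ⊕ Fin d2) → ℝ}
    (hstep : ∀ s, lsvrhgExp g γ p 1 Φ s ≤ ρ * Φ s) (k : ℕ) (s) :
    lsvrhgExp g γ p k Φ s ≤ ρ ^ k * Φ s := by
  induction k generalizing s with
  | zero => simp [lsvrhgExp]
  | succ k ih =>
    have h1p : 0 ≤ 1 - p := sub_nonneg.2 hp1
    calc lsvrhgExp g γ p (k + 1) Φ s
        ≤ ((n : ℝ) ^ 2)⁻¹ * ∑ i, ∑ j, (p * (ρ ^ k * Φ (lsvrhgStep g γ i j true s))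
            + (1 - p) * (ρ ^ k * Φ (lsvrhgStep g γ i j false s))) := by
          simp only [lsvrhgExp]
          gcongr <;> exact ih _
      _ = ρ ^ k * lsvrhgExp g γ p 1 Φ s := by
          simp only [lsvrhgExp, Finset.mul_sum]
          congr! 2 with i _ j _
          ring
      _ ≤ ρ ^ (k + 1) * Φ s := by
          rw [pow_succ, mul_assoc]
          exact mul_le_mul_of_nonneg_left (hstep s) (pow_nonneg hρ k)

theorem lsvrhg_linear_convergence_general
    (hn : 0 < n) (g : Fin n → EuclideanSpace ℝ (Fin d1 ⊕ Fin d2) → ℝ)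
    (hg : ∀ i, ContDiff ℝ 2 (g i))
    (LH : ℝ) (hLH : 0 < LH)
    -- each H_{i,j} is convex and L_H-smooth
    (hconv : ∀ i j, ConvexOn ℝ Set.univ (HamComp g i j))
    (hsmooth : ∀ i j x y,
      ‖gradient (HamComp g i j) x - gradient (HamComp g i j) y‖ ≤ LH * ‖x - y‖)
    (xstar : EuclideanSpace ℝ (Fin d1 ⊕ Fin d2))
    (hmin : ∀ y, Ham g xstar ≤ Ham g y)
    (μ : ℝ)
    -- μ-quasi-strong convexity of H with respect to x*
    (hqsc : ∀ x, Ham g x + ⟪gradient (Ham g) x, xstar - x⟫ + μ / 2 * ‖xstar - x‖ ^ 2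
      ≤ Ham g xstar)
    (γ : ℝ) (hγ : γ = 1 / (6 * LH))
    (p : ℝ) (hp0 : 0 < p) (hp1 : p ≤ 1)
    (Φ : EuclideanSpace ℝ (Fin d1 ⊕ Fin d2) × EuclideanSpace ℝ (Fin d1 ⊕ Fin d2) → ℝ)
    (hΦ : Φ = fun s => ‖s.1 - xstar‖ ^ 2 + 4 * γ ^ 2 / (p * (n : ℝ) ^ 2) *
      ∑ i, ∑ j, ‖gradient (HamComp g i j) s.2 - gradient (HamComp g i j) xstar‖ ^ 2)
    (x0 : EuclideanSpace ℝ (Fin d1 ⊕ Fin d2)) :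
    ∀ k : ℕ, lsvrhgExp g γ p k Φ (x0, x0)
      ≤ max (1 - μ / (6 * LH)) (1 - p / 2) ^ k * Φ (x0, x0) := by
  have : Nonempty (Fin n × Fin n) := ⟨(⟨0, hn⟩, ⟨0, hn⟩)⟩
  have hstar : gradient (Ham g) xstar = 0 := by
    rw [gradient, IsLocalMin.fderiv_eq_zero (Filter.Eventually.of_forall hmin), map_zero]
  have hΦ' : Φ = svrgLyapunov (fun k : Fin n × Fin n => HamComp g k.1 k.2) xstar γ p := by
    funext s
    rw [hΦ, svrgLyapunov, average_prod_fin fun i j =>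
      ‖gradient (HamComp g i j) s.2 - gradient (HamComp g i j) xstar‖ ^ 2]
    ring
  have hγμ : γ * μ = μ / (6 * LH) := by rw [hγ]; ring
  have hstep : ∀ s, lsvrhgExp g γ p 1 Φ s ≤ max (1 - μ / (6 * LH)) (1 - p / 2) * Φ s := by
    rintro ⟨x, w⟩
    have hlem := average_svrgLyapunov_step_le (fs := fun k : Fin n × Fin n => HamComp g k.1 k.2)
      hLH (fun k => hconv k.1 k.2)
      (fun k => differentiable_HamComp hg k.1 k.2) (fun k => hsmooth k.1 k.2)
      (Ham_eq_average g) hstar (hqsc x) (by rw [hγ]; positivity) hγ.le hp0 w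
    simp only [lsvrhgExp, lsvrhgStep_eq, if_true, Bool.false_eq_true, if_false]
    rw [← hγμ, hΦ']
    exact (average_prod_fin _).symm.trans_le hlem
  exact fun k => lsvrhgExp_le_pow_mul hp0.le hp1
    ((by linarith : (0 : ℝ) ≤ 1 - p / 2).trans (le_max_right _ _)) hstep k _

theorem lsvrhg_linear_convergence
    (hn : 0 < n) (g : Fin n → EuclideanSpace ℝ (Fin d1 ⊕ Fin d2) → ℝ)
    (hg : ∀ i, ContDiff ℝ 2 (g i))
    (LH : ℝ) (hLH : 0 < LH)
    -- each H_{i,j} is convex and L_H-smooth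
    (hconv : ∀ i j, ConvexOn ℝ Set.univ (HamComp g i j))
    (hsmooth : ∀ i j x y,
      ‖gradient (HamComp g i j) x - gradient (HamComp g i j) y‖ ≤ LH * ‖x - y‖)
    (xstar : EuclideanSpace ℝ (Fin d1 ⊕ Fin d2))
    (hmin : ∀ y, Ham g xstar ≤ Ham g y)
    (μ : ℝ) (hμ : 0 < μ)
    -- μ-quasi-strong convexity of H with respect to x*
    (hqsc : ∀ x, Ham g x + ⟪gradient (Ham g) x, xstar - x⟫ + μ / 2 * ‖xstar - x‖ ^ 2
      ≤ Ham g xstar)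
    (γ : ℝ) (hγ : γ = 1 / (6 * LH))
    (p : ℝ) (hp0 : 0 < p) (hp1 : p ≤ 1)
    (Φ : EuclideanSpace ℝ (Fin d1 ⊕ Fin d2) × EuclideanSpace ℝ (Fin d1 ⊕ Fin d2) → ℝ)
    (hΦ : Φ = fun s => ‖s.1 - xstar‖ ^ 2 + 4 * γ ^ 2 / (p * (n : ℝ) ^ 2) *
      ∑ i, ∑ j, ‖gradient (HamComp g i j) s.2 - gradient (HamComp g i j) xstar‖ ^ 2)
    (x0 : EuclideanSpace ℝ (Fin d1 ⊕ Fin d2)) :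
    ∀ k : ℕ, lsvrhgExp g γ p k Φ (x0, x0)
      ≤ max (1 - μ / (6 * LH)) (1 - p / 2) ^ k * Φ (x0, x0) :=
  lsvrhg_linear_convergence_general hn g hg LH hLH hconv hsmooth xstar hmin μ hqsc γ hγ p hp0 hp1 Φ
    hΦ x0

end
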